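/- arXiv:1604.02172 — 5 statements merged into one kernel-verified Lean document; each statement's English description precedes it below -/
import Mathlib

section
/- Let A be a real symmetric copositive matrix of order n (n ≥ 2) such that some principal submatrix of A of order n−1 is positive semidefinite. Then A is SPN. -/
open Matrix

/-- A real symmetric matrix `A` is *copositive* if `xᵀAx ≥ 0` for every
entrywise nonnegative vector `x`. -/
def Copositive {ι : Type*} [Fintype ι] (A : Matrix ι ι ℝ) : Prop :=
  ∀ x : ι → ℝ, (∀ i, 0 ≤ x i) → 0 ≤ x ⬝ᵥ A.mulVec x

/-- A real symmetric matrix is *SPN* if it is the sum of a positive semidefinite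
matrix and a symmetric entrywise nonnegative matrix. -/
def IsSPN {ι : Type*} [Fintype ι] (A : Matrix ι ι ℝ) : Prop :=
  ∃ P N : Matrix ι ι ℝ, P.PosSemidef ∧ N.IsSymm ∧ (∀ i j, 0 ≤ N i j) ∧ A = P + N

/-!
For `ε > 0` minimise `xᵀ(A + εI)x` over the face `{x ≥ 0, x k = 1}` of the nonnegative orthant,
where `k` is the index left out of the positive semidefinite principal submatrix; copositivity
makes the form coercive there. At a minimiser `z`, the first-order conditions say that
`v = (A + εI)z - (zᵀ(A + εI)z) e_k` is nonnegative, and for `M = A + εI` the identity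
`xᵀMx = wᵀMw + (x k)² zᵀMz + 2 (x k) vᵀx` with `w = x - (x k) z` (so `w k = 0`) shows that
`M - (v e_kᵀ + e_k vᵀ)` is positive semidefinite. These `v` stay bounded as `ε → 0`, and a limit
point `v` gives `A = (A - N) + N` with `N = v e_kᵀ + e_k vᵀ` entrywise nonnegative.
-/

open Filter Topology Set

namespace Matrix

section CommRing

variable {ι R : Type*} [CommRing R]

def symmOuter (v w : ι → R) : Matrix ι ι R := vecMulVec v w + vecMulVec w v

theorem isSymm_symmOuter (v w : ι → R) : (symmOuter v w).IsSymm := by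
  simp only [IsSymm, symmOuter, transpose_add, transpose_vecMulVec, add_comm]

variable [Fintype ι] {M : Matrix ι ι R}

theorem IsSymm.dotProduct_mulVec_comm (hM : M.IsSymm) (x y : ι → R) :
    x ⬝ᵥ M *ᵥ y = y ⬝ᵥ M *ᵥ x := by
  rw [← dotProduct_transpose_mulVec, hM.eq]

theorem IsSymm.dotProduct_add_smul_mulVec (hM : M.IsSymm) (z d : ι → R) (s : R) :
    (z + s • d) ⬝ᵥ M *ᵥ (z + s • d) =
      z ⬝ᵥ M *ᵥ z + 2 * s * (d ⬝ᵥ M *ᵥ z) + s ^ 2 * (d ⬝ᵥ M *ᵥ d) := by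
  simp only [mulVec_add, mulVec_smul, add_dotProduct, dotProduct_add, smul_dotProduct,
    dotProduct_smul, smul_eq_mul, hM.dotProduct_mulVec_comm z d]
  ring

theorem IsSymm.dotProduct_mulVec_self_eq [DecidableEq ι] (hM : M.IsSymm) (z x : ι → R) (k : ι) :
    x ⬝ᵥ M *ᵥ x = (x - x k • z) ⬝ᵥ M *ᵥ (x - x k • z) + x k ^ 2 * (z ⬝ᵥ M *ᵥ z) +
      2 * x k * ((M *ᵥ z - (z ⬝ᵥ M *ᵥ z) • Pi.single k 1) ⬝ᵥ x) := by
  rw [sub_eq_add_neg x, ← neg_smul, hM.dotProduct_add_smul_mulVec, sub_dotProduct,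
    smul_dotProduct, single_dotProduct, dotProduct_comm (M *ᵥ z), hM.dotProduct_mulVec_comm x z]
  simp only [smul_eq_mul]
  ring

theorem dotProduct_symmOuter_mulVec (v w x : ι → R) :
    x ⬝ᵥ symmOuter v w *ᵥ x = 2 * (v ⬝ᵥ x) * (w ⬝ᵥ x) := by
  simp only [symmOuter, add_mulVec, vecMulVec_mulVec, op_smul_eq_smul, dotProduct_add,
    dotProduct_smul, smul_eq_mul, dotProduct_comm x v, dotProduct_comm x w]
  ring

end CommRing

end Matrix

section Real

variable {ι : Type*} [Fintype ι] {M : Matrix ι ι ℝ}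

theorem dotProduct_self_nonneg (x : ι → ℝ) : 0 ≤ x ⬝ᵥ x := by
  simpa using dotProduct_star_self_nonneg x

theorem nonneg_of_forall_mem_Ioc_nonneg_add_mul {a c : ℝ}
    (h : ∀ s ∈ Ioc (0 : ℝ) 1, 0 ≤ a + s * c) : 0 ≤ a := by
  have hlim : Tendsto (fun s : ℝ => a + s * c) (𝓝[>] 0) (𝓝 a) := by
    have : Continuous fun s : ℝ => a + s * c := by fun_prop
    simpa using (this.tendsto 0).mono_left nhdsWithin_le_nhds
  exact ge_of_tendsto hlim (eventually_of_mem (Ioc_mem_nhdsGT one_pos) h)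

theorem Matrix.IsSymm.nonneg_dotProduct_mulVec_of_isMinOn (hM : M.IsSymm) {F : Set (ι → ℝ)}
    {z d : ι → ℝ} (hz : IsMinOn (fun x => x ⬝ᵥ M *ᵥ x) F z)
    (hd : ∀ s ∈ Ioc (0 : ℝ) 1, z + s • d ∈ F) : 0 ≤ d ⬝ᵥ M *ᵥ z := by
  suffices 0 ≤ 2 * (d ⬝ᵥ M *ᵥ z) by linarith
  refine nonneg_of_forall_mem_Ioc_nonneg_add_mul (c := d ⬝ᵥ M *ᵥ d) fun s hs => ?_
  have hle := hM.dotProduct_add_smul_mulVec z d s ▸ isMinOn_iff.1 hz _ (hd s hs)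
  have : 0 ≤ s * (2 * (d ⬝ᵥ M *ᵥ z) + s * (d ⬝ᵥ M *ᵥ d)) := by linarith
  exact nonneg_of_mul_nonneg_right this hs.1

theorem isSPN_of_two_mul_dotProduct_le {A : Matrix ι ι ℝ} (hA : A.IsSymm) {v w : ι → ℝ}
    (hv : 0 ≤ v) (hw : 0 ≤ w) (h : ∀ x, 2 * (v ⬝ᵥ x) * (w ⬝ᵥ x) ≤ x ⬝ᵥ A *ᵥ x) : IsSPN A := by
  refine ⟨A - symmOuter v w, symmOuter v w, ?_, isSymm_symmOuter v w, fun i j => ?_,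
    (sub_add_cancel _ _).symm⟩
  · refine .of_dotProduct_mulVec_nonneg (by simpa using hA.sub (isSymm_symmOuter v w)) fun x => ?_
    simpa [sub_mulVec, dotProduct_symmOuter_mulVec] using h x
  · simp only [symmOuter, Matrix.add_apply, vecMulVec_apply]
    exact add_nonneg (mul_nonneg (hv i) (hw j)) (mul_nonneg (hw i) (hv j))

variable [DecidableEq ι]

theorem exists_isMinOn_dotProduct_mulVec_of_coercive {ε : ℝ} (hε : 0 < ε)
    (hcoer : ∀ x, 0 ≤ x → ε * (x ⬝ᵥ x) ≤ x ⬝ᵥ M *ᵥ x) (k : ι) :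
    ∃ z ∈ {x : ι → ℝ | 0 ≤ x ∧ x k = 1},
      IsMinOn (fun x => x ⬝ᵥ M *ᵥ x) {x : ι → ℝ | 0 ≤ x ∧ x k = 1} z := by
  have hF : IsClosed {x : ι → ℝ | 0 ≤ x ∧ x k = 1} :=
    (isClosed_le continuous_const continuous_id).inter
      (isClosed_eq (continuous_apply k) continuous_const)
  have hek : Pi.single k 1 ∈ {x : ι → ℝ | 0 ≤ x ∧ x k = 1} :=
    ⟨Pi.single_nonneg.2 zero_le_one, Pi.single_eq_same k 1⟩
  refine (Continuous.continuousOn (by fun_prop)).exists_isMinOn' hF hek ?_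
  set R := max 1 (M k k / ε)
  refine (hasBasis_cocompact.inf_principal _).eventually_iff.2
    ⟨pi univ fun _ => Icc 0 R, isCompact_univ_pi fun _ => isCompact_Icc, ?_⟩
  rintro x ⟨hxR, hx0, -⟩
  obtain ⟨j, hj⟩ : ∃ j, R < x j := by
    by_contra! h
    exact hxR fun j _ => ⟨hx0 j, h j⟩
  have hxj : x j * x j ≤ x ⬝ᵥ x :=
    Finset.single_le_sum (fun i _ => mul_self_nonneg (x i)) (Finset.mem_univ j)
  have h1 : 1 < x j := (le_max_left _ _).trans_lt hj
  have h2 : M k k < ε * x j := (div_lt_iff₀' hε).1 ((le_max_right _ _).trans_lt hj)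
  have hek : Pi.single k 1 ⬝ᵥ M *ᵥ Pi.single k 1 = M k k := by
    simp [mulVec_single, single_dotProduct]
  show _ ≤ _
  nlinarith [hcoer x hx0, mul_le_mul_of_nonneg_left hxj hε.le,
    mul_lt_mul_of_pos_left h1 (mul_pos hε (zero_lt_one.trans h1))]

theorem Matrix.IsSymm.exists_nonneg_mulVec_sub_smul_single (hM : M.IsSymm) {ε : ℝ} (hε : 0 < ε)
    (hcoer : ∀ x, 0 ≤ x → ε * (x ⬝ᵥ x) ≤ x ⬝ᵥ M *ᵥ x) (k : ι) :
    ∃ z, 0 ≤ z ∧ z k = 1 ∧ 0 ≤ M *ᵥ z - (z ⬝ᵥ M *ᵥ z) • Pi.single k 1 := by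
  obtain ⟨z, ⟨hz0, hzk⟩, hmin⟩ := exists_isMinOn_dotProduct_mulVec_of_coercive hε hcoer k
  refine ⟨z, hz0, hzk, fun i => ?_⟩
  have hsingle : ∀ j, 0 ≤ (Pi.single i 1 : ι → ℝ) j ∧ (Pi.single i 1 : ι → ℝ) j ≤ 1 := by
    intro j
    rw [Pi.single_apply]
    split_ifs <;> norm_num
  -- `z + s • (eᵢ - eᵢ k • z) = (1 - s * eᵢ k) • z + s • eᵢ` stays in the face
  have := hM.nonneg_dotProduct_mulVec_of_isMinOn hmin
    (d := Pi.single i 1 - (Pi.single i 1 : ι → ℝ) k • z) fun s ⟨hs0, hs1⟩ => by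
      refine ⟨fun j => ?_, by simp [hzk]⟩
      obtain ⟨hj0, -⟩ := hsingle j
      obtain ⟨hk0, hk1⟩ := hsingle k
      simp only [Pi.add_apply, Pi.smul_apply, Pi.sub_apply, smul_eq_mul, Pi.zero_apply]
      nlinarith [mul_nonneg (sub_nonneg.2 (mul_le_one₀ hs1 hk0 hk1)) (hz0 j), mul_nonneg hs0.le hj0]
  have hik : (Pi.single i 1 : ι → ℝ) k = (Pi.single k 1 : ι → ℝ) i := by
    simp [Pi.single_apply, eq_comm]
  rw [sub_dotProduct, smul_dotProduct, single_dotProduct, hik] at this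
  simpa [mul_comm] using this

theorem Matrix.IsSymm.exists_nonneg_two_mul_le_of_coercive (hM : M.IsSymm) {ε : ℝ} (hε : 0 < ε)
    (hcoer : ∀ x, 0 ≤ x → ε * (x ⬝ᵥ x) ≤ x ⬝ᵥ M *ᵥ x) (k : ι)
    (hV : ∀ x, x k = 0 → 0 ≤ x ⬝ᵥ M *ᵥ x) :
    ∃ v, 0 ≤ v ∧ ∀ x, 2 * x k * (v ⬝ᵥ x) ≤ x ⬝ᵥ M *ᵥ x := by
  obtain ⟨z, hz0, hzk, hv⟩ := hM.exists_nonneg_mulVec_sub_smul_single hε hcoer k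
  refine ⟨_, hv, fun x => ?_⟩
  have hw : 0 ≤ (x - x k • z) ⬝ᵥ M *ᵥ (x - x k • z) := hV _ (by simp [hzk])
  have hz : 0 ≤ z ⬝ᵥ M *ᵥ z := (mul_nonneg hε.le (dotProduct_self_nonneg z)).trans (hcoer z hz0)
  linarith [hM.dotProduct_mulVec_self_eq z x k, mul_nonneg (sq_nonneg (x k)) hz]

theorem exists_nonneg_two_mul_le_of_forall_pos {A : Matrix ι ι ℝ} {k : ι}
    (h : ∀ ε > 0, ∃ v, 0 ≤ v ∧ ∀ x, 2 * x k * (v ⬝ᵥ x) ≤ x ⬝ᵥ A *ᵥ x + ε * (x ⬝ᵥ x)) :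
    ∃ v, 0 ≤ v ∧ ∀ x, 2 * x k * (v ⬝ᵥ x) ≤ x ⬝ᵥ A *ᵥ x := by
  set S : ℕ → Set (ι → ℝ) := fun m =>
    {v | 0 ≤ v ∧ ∀ x, 2 * x k * (v ⬝ᵥ x) ≤ x ⬝ᵥ A *ᵥ x + 1 / (m + 1) * (x ⬝ᵥ x)}
  have hanti : ∀ m, S (m + 1) ⊆ S m := by
    rintro m v ⟨hv, hvx⟩
    refine ⟨hv, fun x => (hvx x).trans ?_⟩
    gcongr
    · exact dotProduct_self_nonneg x
    · linarith
  have hclosed : ∀ m, IsClosed (S m) := fun m => by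
    simp only [S, ofPred_and, ofPred_forall]
    exact (isClosed_le continuous_const continuous_id).inter (isClosed_iInter fun x =>
      isClosed_le (continuous_const.mul (continuous_id.dotProduct continuous_const))
        continuous_const)
  -- testing the defining inequality of `S 0` at `Pi.single i 1 + Pi.single k 1` bounds `v i`
  have hbdd : S 0 ⊆ pi univ fun i =>
      Icc 0 (((Pi.single i 1 + Pi.single k 1) ⬝ᵥ A *ᵥ (Pi.single i 1 + Pi.single k 1) +
        (Pi.single i 1 + Pi.single k 1) ⬝ᵥ (Pi.single i 1 + Pi.single k 1)) / 2) := by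
    rintro v ⟨hv, hvx⟩ i -
    have hy := hvx (Pi.single i 1 + Pi.single k 1)
    have hyk : 1 ≤ (Pi.single i 1 + Pi.single k 1 : ι → ℝ) k := by
      simp only [Pi.add_apply, Pi.single_apply]
      split_ifs <;> norm_num
    have hvy : v i ≤ v ⬝ᵥ (Pi.single i 1 + Pi.single k 1) := by
      rw [dotProduct_add, dotProduct_single, dotProduct_single]
      linarith [show 0 ≤ v k from hv k]
    refine ⟨hv i, ?_⟩
    simp only [Nat.cast_zero, zero_add, div_one, one_mul] at hy
    nlinarith [mul_le_mul_of_nonneg_right hyk ((hv i).trans hvy)]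
  obtain ⟨v, hv⟩ := IsCompact.nonempty_iInter_of_sequence_nonempty_isCompact_isClosed S hanti
    (fun m => h _ (by positivity))
    ((isCompact_univ_pi fun _ => isCompact_Icc).of_isClosed_subset (hclosed 0) hbdd) hclosed
  have hlim (x : ι → ℝ) : Tendsto (fun m : ℕ => x ⬝ᵥ A *ᵥ x + 1 / ((m : ℝ) + 1) * (x ⬝ᵥ x))
      atTop (𝓝 (x ⬝ᵥ A *ᵥ x)) := by
    simpa using tendsto_const_nhds.add
      (tendsto_one_div_add_atTop_nhds_zero_nat.mul_const (x ⬝ᵥ x))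
  rw [mem_iInter] at hv
  exact ⟨v, (hv 0).1, fun x => ge_of_tendsto' (hlim x) fun m => (hv m).2 x⟩

theorem isSPN_of_copositive_of_nonneg_of_apply_eq_zero {A : Matrix ι ι ℝ} (hA : A.IsSymm)
    (hcop : Copositive A) (k : ι) (hV : ∀ x, x k = 0 → 0 ≤ x ⬝ᵥ A *ᵥ x) : IsSPN A := by
  have hquad (ε : ℝ) (x : ι → ℝ) :
      x ⬝ᵥ (A + ε • 1) *ᵥ x = x ⬝ᵥ A *ᵥ x + ε * (x ⬝ᵥ x) := by
    rw [add_mulVec, smul_mulVec, one_mulVec, dotProduct_add, dotProduct_smul, smul_eq_mul]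
  obtain ⟨v, hv, hvA⟩ := exists_nonneg_two_mul_le_of_forall_pos fun ε hε => by
    simpa only [hquad] using (hA.add (isSymm_one.smul ε)).exists_nonneg_two_mul_le_of_coercive hε
      (fun x hx => by linarith [hquad ε x, hcop x hx]) k
      (fun x hx => by nlinarith [hquad ε x, hV x hx, dotProduct_self_nonneg x])
  refine isSPN_of_two_mul_dotProduct_le hA hv (w := Pi.single k 1) (Pi.single_nonneg.2 zero_le_one)
    fun x => ?_
  simpa [single_dotProduct, mul_right_comm] using hvA x

end Real

theorem dotProduct_comp_submatrix_mulVec_comp {ι κ R : Type*} [Fintype ι] [Fintype κ]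
    [CommSemiring R] {f : κ → ι} (hf : Function.Injective f) (A : Matrix ι ι R) {x : ι → R}
    (hx : ∀ i ∉ range f, x i = 0) :
    (x ∘ f) ⬝ᵥ A.submatrix f f *ᵥ (x ∘ f) = x ⬝ᵥ A *ᵥ x := by
  have hAx : (A *ᵥ x) ∘ f = A.submatrix f f *ᵥ (x ∘ f) := by
    ext j
    exact (Fintype.sum_of_injective f hf _ _ (fun i hi => by simp [hx i hi]) fun _ => rfl).symm
  rw [← hAx]
  exact Fintype.sum_of_injective f hf _ _ (fun i hi => by simp [hx i hi]) fun _ => rfl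

/-- A copositive symmetric matrix of order `n ≥ 2` with a positive
semidefinite principal submatrix of order `n - 1` is SPN. -/
theorem copositive_of_psd_principal_submatrix_isSPN
    (n : ℕ) (hn : 2 ≤ n) (A : Matrix (Fin n) (Fin n) ℝ)
    (hA : A.IsSymm) (hcop : Copositive A)
    (hsub : ∃ f : Fin (n - 1) ↪ Fin n, (A.submatrix f f).PosSemidef) :
    IsSPN A := by
  obtain ⟨f, hf⟩ := hsub
  obtain ⟨k, hk⟩ : ∃ k, (Finset.univ.map f)ᶜ = {k} := by
    rw [← Finset.card_eq_one, Finset.card_compl, Finset.card_map]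
    simp only [Finset.card_univ, Fintype.card_fin]
    omega
  have hrange (i : Fin n) (hi : i ≠ k) : i ∈ range f := by
    have : i ∉ (Finset.univ.map f)ᶜ := by simpa [hk] using hi
    simpa using this
  refine isSPN_of_copositive_of_nonneg_of_apply_eq_zero hA hcop k fun x hxk => ?_
  rw [← dotProduct_comp_submatrix_mulVec_comp f.injective A fun i hi => ?_]
  · simpa using hf.dotProduct_mulVec_nonneg (x ∘ f)
  · by_contra hxi
    exact hi (hrange i fun hik => hxi (hik ▸ hxk))
end

section
/- Let A be a real symmetric copositive matrix of order n, and suppose there exists a nonzero entrywise nonnegative vector u ∈ ℝⁿ with uᵀAu = 0 such that u has at least n−2 nonzero entries and the vector Au has at least n−1 entries equal to 0. Then A is SPN. -/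
open Matrix

/-!
Complementary slackness at the zero `u` (`(Au)ᵢ = 0` wherever `uᵢ > 0`) and the two counting
hypotheses give an index `k` with `(Au)ᵢ = 0` for all `i ≠ k`, and at most one further index `m`
with `u_m = 0`. Up to sign every `y` with `y_k = 0` has `y_m ≥ 0`, so it is a feasible direction
at `u` orthogonal to `Au`, and second-order optimality of the zero gives `yᵀAy ≥ 0`: `A` is
positive semidefinite on the hyperplane `x_k = 0`.

Such a copositive matrix is SPN. Let `c = A_kk`, `B` be `A` with row and column `k` replaced by
zeros and `b` the off-diagonal part of row `k`. Copositivity along `y + t e_k` (`y ≥ 0`, `t ≥ 0`)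
gives `bᵀy ≥ -√(c yᵀBy)`, and a Hahn–Banach separation of the ellipsoid
`{p | ∀ x, (pᵀx)² ≤ c xᵀBx}` from `b - ℝ≥0ⁿ` turns this into `p ≤ b` inside the ellipsoid.
Then `P = [[c, pᵀ], [p, B]]` is positive semidefinite and `A - P` is nonnegative.
-/

open Filter Topology

namespace Matrix

variable {ι κ : Type*} [Fintype ι] {A : Matrix ι ι ℝ}

theorem IsSymm.dotProduct_mulVec_comm_s1 (hA : A.IsSymm) (x y : ι → ℝ) :
    x ⬝ᵥ A *ᵥ y = y ⬝ᵥ A *ᵥ x := by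
  rw [dotProduct_mulVec, ← mulVec_transpose, hA.eq, dotProduct_comm]

theorem IsSymm.dotProduct_mulVec_add_smul (hA : A.IsSymm) (x y : ι → ℝ) (t : ℝ) :
    (x + t • y) ⬝ᵥ A *ᵥ (x + t • y) =
      x ⬝ᵥ A *ᵥ x + 2 * t * (y ⬝ᵥ A *ᵥ x) + t ^ 2 * (y ⬝ᵥ A *ᵥ y) := by
  simp only [mulVec_add, mulVec_smul, dotProduct_add, add_dotProduct, dotProduct_smul,
    smul_dotProduct, smul_eq_mul, hA.dotProduct_mulVec_comm_s1 x y]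
  ring

theorem IsSymm.dotProduct_mulVec_add_single [DecidableEq ι] (hA : A.IsSymm) (x : ι → ℝ)
    (k : ι) (t : ℝ) :
    (x + Pi.single k t) ⬝ᵥ A *ᵥ (x + Pi.single k t) =
      x ⬝ᵥ A *ᵥ x + 2 * t * (A *ᵥ x) k + t ^ 2 * A k k := by
  rw [← mul_one t, ← smul_eq_mul, Pi.single_smul', hA.dotProduct_mulVec_add_smul]
  simp [single_dotProduct]

theorem PosSemidef.sq_dotProduct_mulVec_le {B : Matrix ι ι ℝ} (hB : B.PosSemidef) (x y : ι → ℝ) :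
    (x ⬝ᵥ B *ᵥ y) ^ 2 ≤ (x ⬝ᵥ B *ᵥ x) * (y ⬝ᵥ B *ᵥ y) := by
  have hsymm : B.IsSymm := isHermitian_iff_isSymm.mp hB.isHermitian
  have := discrim_le_zero (a := x ⬝ᵥ B *ᵥ x) (b := 2 * (x ⬝ᵥ B *ᵥ y)) (c := y ⬝ᵥ B *ᵥ y)
    fun t => by
      have := hB.dotProduct_mulVec_nonneg (y + t • x)
      rw [star_trivial, hsymm.dotProduct_mulVec_add_smul] at this
      linarith
  rw [discrim] at this
  linarith

theorem dotProduct_transpose_mul_mul_mulVec [Fintype κ] (A : Matrix ι ι ℝ) (D : Matrix ι κ ℝ)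
    (x y : κ → ℝ) : x ⬝ᵥ (Dᵀ * A * D) *ᵥ y = (D *ᵥ x) ⬝ᵥ A *ᵥ (D *ᵥ y) := by
  rw [← mulVec_mulVec, ← mulVec_mulVec, dotProduct_mulVec, vecMul_transpose, dotProduct_mulVec]

theorem diagonal_update_one_mulVec [DecidableEq ι] (k : ι) (x : ι → ℝ) :
    diagonal (Function.update 1 k 0) *ᵥ x = Function.update x k 0 := by
  ext i
  by_cases hik : i = k <;> simp [mulVec_diagonal, hik]

theorem update_zero_dotProduct [DecidableEq ι] (v w : ι → ℝ) (k : ι) :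
    Function.update v k 0 ⬝ᵥ w = v ⬝ᵥ Function.update w k 0 :=
  Finset.sum_congr rfl fun i _ => by by_cases hik : i = k <;> simp [hik]

theorem IsSymm.dotProduct_mulVec_eq_update [DecidableEq ι] (hA : A.IsSymm) (x : ι → ℝ) (k : ι) :
    x ⬝ᵥ A *ᵥ x = Function.update x k 0 ⬝ᵥ A *ᵥ Function.update x k 0
      + 2 * x k * (Function.update (A k) k 0 ⬝ᵥ x) + x k ^ 2 * A k k := by
  have hx : x = Function.update x k 0 + Pi.single k (x k) := by
    ext i
    by_cases hik : i = k <;> simp [hik]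
  conv_lhs => rw [hx]
  rw [hA.dotProduct_mulVec_add_single, update_zero_dotProduct (A k)]
  rfl

end Matrix

theorem neg_sqrt_mul_le_of_forall_nonneg {s β c : ℝ}
    (h : ∀ t, 0 ≤ t → 0 ≤ s + 2 * β * t + c * t ^ 2) : -√(c * s) ≤ β := by
  rcases le_or_gt 0 β with hβ | hβ
  · linarith [Real.sqrt_nonneg (c * s)]
  rcases le_or_gt c 0 with hc | hc
  · have := h ((s + 1) / (-2 * β)) (div_nonneg (by linarith [h 0 le_rfl]) (by linarith))
    have : 2 * β * ((s + 1) / (-2 * β)) = -(s + 1) := by field_simp [hβ.ne]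
    nlinarith
  · have := h (-β / c) (div_nonneg (by linarith) hc.le)
    have : β ^ 2 ≤ c * s := by
      field_simp at this
      nlinarith
    linarith [neg_abs_le β, Real.abs_le_sqrt this]

theorem quadratic_nonneg_of_sq_le_mul {a β c : ℝ} (ha : 0 ≤ a) (hc : 0 ≤ c)
    (h : β ^ 2 ≤ c * a) (t : ℝ) : 0 ≤ a + 2 * β * t + c * t ^ 2 := by
  rcases hc.eq_or_lt with rfl | hc
  · obtain rfl : β = 0 := by nlinarith
    simpa using ha
  · nlinarith [sq_nonneg (β + c * t)]

open Finset in
theorem Finset.card_filter_not_le_of_card_sub_le {α : Type*} [Fintype α] {p : α → Prop}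
    [DecidablePred p] {r : ℕ} (h : Fintype.card α - r ≤ #{i | p i}) : #{i | ¬p i} ≤ r := by
  have := card_filter_add_card_filter_not (s := univ) fun i => p i
  rw [card_univ] at this
  omega

open Finset in
theorem Finset.exists_forall_eq_and_forall_eq_or_eq {α : Type*} [Fintype α] [Nonempty α]
    {p q : α → Prop} [DecidablePred p] [DecidablePred q] (hqp : ∀ i, q i → p i)
    (hp : #{i | p i} ≤ 2) (hq : #{i | q i} ≤ 1) :
    ∃ k m, (∀ i, q i → i = k) ∧ ∀ i, p i → i = k ∨ i = m := by
  classical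
  obtain ⟨k, hqk, hk⟩ : ∃ k, (∀ i, q i → i = k) ∧ #(({i | p i} : Finset α).erase k) ≤ 1 := by
    by_cases hQ : ∃ j, q j
    · obtain ⟨k, hk⟩ := hQ
      refine ⟨k, fun i hi => card_le_one.mp hq i (by simpa) k (by simpa), ?_⟩
      rw [card_erase_of_mem (by simpa using hqp k hk)]
      omega
    rcases ({i | p i} : Finset α).eq_empty_or_nonempty with hP | ⟨k, hk⟩
    · exact ⟨Classical.arbitrary α, fun i hi => (hQ ⟨i, hi⟩).elim, by simp [hP]⟩
    · refine ⟨k, fun i hi => (hQ ⟨i, hi⟩).elim, ?_⟩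
      rw [card_erase_of_mem hk]
      omega
  obtain ⟨m, hm⟩ := card_le_one_iff_subset_singleton.mp hk
  refine ⟨k, m, hqk, fun i hi => or_iff_not_imp_left.mpr fun hik => ?_⟩
  simpa using hm (mem_erase.mpr ⟨hik, by simpa using hi⟩)

theorem tendsto_add_mul_nhdsGT_zero (a b : ℝ) :
    Tendsto (fun t => a + t * b) (𝓝[>] 0) (𝓝 a) :=
  tendsto_nhdsWithin_of_tendsto_nhds <| by
    simpa using (Continuous.tendsto (f := fun t : ℝ => a + t * b) (by fun_prop) 0)

theorem eventually_nonneg_add_smul {ι : Type*} [Finite ι] {u y : ι → ℝ} (hu : 0 ≤ u)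
    (hy : ∀ i, u i = 0 → 0 ≤ y i) : ∀ᶠ t in 𝓝[>] (0 : ℝ), 0 ≤ u + t • y := by
  simp only [Pi.le_def, Pi.zero_apply, Pi.add_apply, Pi.smul_apply, smul_eq_mul,
    eventually_all]
  intro i
  rcases (show 0 ≤ u i from hu i).eq_or_lt with hui | hui
  · filter_upwards [self_mem_nhdsWithin] with t (ht : 0 < t)
    rw [← hui, zero_add]
    exact mul_nonneg ht.le (hy i hui.symm)
  · exact ((tendsto_add_mul_nhdsGT_zero _ _).eventually_const_lt hui).mono fun t ht => ht.le

namespace Copositive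

variable {ι : Type*} [Fintype ι] {A : Matrix ι ι ℝ} {u y : ι → ℝ}

theorem eventually_nonneg_of_zero (hcop : Copositive A) (hA : A.IsSymm) (hu : 0 ≤ u)
    (huz : u ⬝ᵥ A *ᵥ u = 0) (hy : ∀ i, u i = 0 → 0 ≤ y i) :
    ∀ᶠ t in 𝓝[>] (0 : ℝ), 0 ≤ 2 * (y ⬝ᵥ A *ᵥ u) + t * (y ⬝ᵥ A *ᵥ y) := by
  filter_upwards [eventually_nonneg_add_smul hu hy, self_mem_nhdsWithin] with t hut (ht : 0 < t)
  have := hcop _ hut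
  rw [hA.dotProduct_mulVec_add_smul, huz] at this
  exact nonneg_of_mul_nonneg_right (by linarith) ht

theorem dotProduct_mulVec_nonneg_of_zero (hcop : Copositive A) (hA : A.IsSymm) (hu : 0 ≤ u)
    (huz : u ⬝ᵥ A *ᵥ u = 0) (hy : ∀ i, u i = 0 → 0 ≤ y i) : 0 ≤ y ⬝ᵥ A *ᵥ u := by
  linarith [ge_of_tendsto (tendsto_add_mul_nhdsGT_zero _ _)
    (hcop.eventually_nonneg_of_zero hA hu huz hy)]

theorem dotProduct_mulVec_self_nonneg_of_zero (hcop : Copositive A) (hA : A.IsSymm) (hu : 0 ≤ u)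
    (huz : u ⬝ᵥ A *ᵥ u = 0) (hy : ∀ i, u i = 0 → 0 ≤ y i) (hyu : y ⬝ᵥ A *ᵥ u = 0) :
    0 ≤ y ⬝ᵥ A *ᵥ y := by
  obtain ⟨t, hnonneg, ht : 0 < t⟩ :=
    ((hcop.eventually_nonneg_of_zero hA hu huz hy).and self_mem_nhdsWithin).exists
  rw [hyu, mul_zero, zero_add] at hnonneg
  exact nonneg_of_mul_nonneg_right hnonneg ht

theorem mulVec_apply_eq_zero_of_zero [DecidableEq ι] (hcop : Copositive A) (hA : A.IsSymm)
    (hu : 0 ≤ u) (huz : u ⬝ᵥ A *ᵥ u = 0) {i : ι} (hui : u i ≠ 0) : (A *ᵥ u) i = 0 := by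
  have hsingle := hcop.dotProduct_mulVec_nonneg_of_zero hA hu huz (y := Pi.single i 1)
    fun j _ => by simp [Pi.single_apply, apply_ite]
  have hneg := hcop.dotProduct_mulVec_nonneg_of_zero hA hu huz (y := -Pi.single i 1) fun j huj => by
    rw [Pi.neg_apply, Pi.single_apply, if_neg (by rintro rfl; exact hui huj), neg_zero]
  simp only [neg_dotProduct, single_dotProduct, one_mul] at hsingle hneg
  linarith

theorem dotProduct_mulVec_self_nonneg_of_apply_eq_zero (hcop : Copositive A) (hA : A.IsSymm)
    (hu : 0 ≤ u) (huz : u ⬝ᵥ A *ᵥ u = 0) {k m : ι} (hAu : ∀ i, i ≠ k → (A *ᵥ u) i = 0)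
    (hzero : ∀ i, u i = 0 → i = k ∨ i = m) (hyk : y k = 0) :
    0 ≤ y ⬝ᵥ A *ᵥ y := by
  wlog hym : 0 ≤ y m generalizing y
  · simpa only [neg_dotProduct, mulVec_neg, dotProduct_neg, neg_neg] using
      this (y := -y) (by simp [hyk]) (by simp only [Pi.neg_apply]; linarith)
  refine hcop.dotProduct_mulVec_self_nonneg_of_zero hA hu huz (fun i hui => ?_) ?_
  · rcases hzero i hui with rfl | rfl
    exacts [hyk.ge, hym]
  · refine Finset.sum_eq_zero fun i _ => ?_
    by_cases hik : i = k
    · rw [hik, hyk, zero_mul]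
    · rw [hAu i hik, mul_zero]

end Copositive

section Farkas

variable {ι : Type*}

theorem StrongDual.apply_eq_dotProduct [Fintype ι] [DecidableEq ι] (f : StrongDual ℝ (ι → ℝ))
    (x : ι → ℝ) :
    f x = x ⬝ᵥ fun i => f (Pi.single i 1) := by
  conv_lhs => rw [← Finset.univ_sum_single x]
  rw [map_sum]
  refine Finset.sum_congr rfl fun i _ => ?_
  rw [← smul_eq_mul, ← map_smul, ← Pi.single_smul', smul_eq_mul, mul_one]

theorem StrongDual.apply_single_nonneg_of_forall_le_lt [DecidableEq ι]
    {f : StrongDual ℝ (ι → ℝ)} {b : ι → ℝ} {u : ℝ} (h : ∀ q ≤ b, f q < u) (i : ι) :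
    0 ≤ f (Pi.single i 1) := by
  by_contra! hneg
  have hfb := h b le_rfl
  have hq : b - ((u - f b) / -f (Pi.single i 1)) • Pi.single i 1 ≤ b :=
    sub_le_self _ <|
      smul_nonneg (div_nonneg (by linarith) (by linarith)) (Pi.single_nonneg.mpr zero_le_one)
  have := h _ hq
  rw [map_sub, map_smul, smul_eq_mul, div_mul_eq_mul_div, div_neg, mul_div_cancel_right₀ _ hneg.ne]
    at this
  linarith

variable [Fintype ι] {B : Matrix ι ι ℝ} {c : ℝ}

theorem convex_setOf_forall_sq_dotProduct_le :
    Convex ℝ {p : ι → ℝ | ∀ x, (p ⬝ᵥ x) ^ 2 ≤ c * (x ⬝ᵥ B *ᵥ x)} := by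
  intro p hp q hq a b ha hb hab x
  simp only [add_dotProduct, smul_dotProduct, smul_eq_mul]
  obtain rfl : b = 1 - a := by linarith
  nlinarith [mul_le_mul_of_nonneg_left (hp x) ha, mul_le_mul_of_nonneg_left (hq x) hb,
    mul_nonneg (mul_nonneg ha hb) (sq_nonneg (p ⬝ᵥ x - q ⬝ᵥ x))]

theorem isCompact_setOf_forall_sq_dotProduct_le [DecidableEq ι] :
    IsCompact {p : ι → ℝ | ∀ x, (p ⬝ᵥ x) ^ 2 ≤ c * (x ⬝ᵥ B *ᵥ x)} := by
  refine (isCompact_univ_pi fun i => isCompact_Icc (a := -√(c * B i i)) (b := √(c * B i i)))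
    |>.of_isClosed_subset ?_ fun p hp i _ => ?_
  · simp only [Set.ofPred_forall]
    exact isClosed_iInter fun x =>
      isClosed_le ((continuous_id.dotProduct continuous_const).pow 2) continuous_const
  · have := hp (Pi.single i 1)
    simp only [dotProduct_single, mul_one, single_dotProduct, one_mul, mulVec_single_one] at this
    exact abs_le.mp (Real.abs_le_sqrt this)

theorem Matrix.PosSemidef.exists_forall_sq_dotProduct_le_and_dotProduct_eq (hB : B.PosSemidef)
    (hc : 0 ≤ c) (y : ι → ℝ) :
    ∃ p : ι → ℝ, (∀ x, (p ⬝ᵥ x) ^ 2 ≤ c * (x ⬝ᵥ B *ᵥ x)) ∧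
      p ⬝ᵥ y = -√(c * (y ⬝ᵥ B *ᵥ y)) := by
  set s := y ⬝ᵥ B *ᵥ y
  have hs : 0 ≤ s := by simpa using hB.dotProduct_mulVec_nonneg y
  -- the point of the ellipsoid `{p | ∀ x, (p ⬝ᵥ x) ^ 2 ≤ c * (x ⬝ᵥ B *ᵥ x)}` minimizing `p ⬝ᵥ y`
  refine ⟨-√(c / s) • B *ᵥ y, fun x => ?_, ?_⟩
  · have hx : 0 ≤ x ⬝ᵥ B *ᵥ x := by simpa using hB.dotProduct_mulVec_nonneg x
    have hcs := hB.sq_dotProduct_mulVec_le x y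
    rw [neg_smul, neg_dotProduct, smul_dotProduct, smul_eq_mul, neg_sq, mul_pow,
      Real.sq_sqrt (div_nonneg hc hs), dotProduct_comm]
    rcases hs.eq_or_lt with hs0 | hs0
    · rw [← hs0, div_zero, zero_mul]
      exact mul_nonneg hc hx
    · calc c / s * (x ⬝ᵥ B *ᵥ y) ^ 2 ≤ c / s * ((x ⬝ᵥ B *ᵥ x) * s) := by gcongr
        _ = c * (x ⬝ᵥ B *ᵥ x) := by field_simp
  · rw [neg_smul, neg_dotProduct, smul_dotProduct, smul_eq_mul, dotProduct_comm, neg_inj]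
    change √(c / s) * s = √(c * s)
    by_cases hs0 : s = 0
    · simp [hs0]
    · calc √(c / s) * s = √(c / s * s ^ 2) := by
            rw [Real.sqrt_mul (div_nonneg hc hs), Real.sqrt_sq hs]
        _ = √(c * s) := by field_simp

theorem Matrix.PosSemidef.exists_le_forall_sq_dotProduct_le [DecidableEq ι] (hB : B.PosSemidef)
    (hc : 0 ≤ c) {b : ι → ℝ} (h : ∀ y, 0 ≤ y → -√(c * (y ⬝ᵥ B *ᵥ y)) ≤ b ⬝ᵥ y) :
    ∃ p ≤ b, ∀ x, (p ⬝ᵥ x) ^ 2 ≤ c * (x ⬝ᵥ B *ᵥ x) := by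
  by_contra! hne
  obtain ⟨f, u, v, hfb, huv, hfS⟩ := geometric_hahn_banach_closed_compact (convex_Iic b)
    isClosed_Iic convex_setOf_forall_sq_dotProduct_le isCompact_setOf_forall_sq_dotProduct_le
    (Set.disjoint_left.mpr fun p hpb hpS => (hne p hpb).elim fun x hx => (hpS x).not_gt hx)
  set y : ι → ℝ := fun i => f (Pi.single i 1)
  have hy : 0 ≤ y := StrongDual.apply_single_nonneg_of_forall_le_lt hfb
  obtain ⟨p, hpS, hpy⟩ := hB.exists_forall_sq_dotProduct_le_and_dotProduct_eq hc y
  have hsep := (hfb b Set.self_mem_Iic).trans (huv.trans (hfS p hpS))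
  rw [StrongDual.apply_eq_dotProduct, StrongDual.apply_eq_dotProduct, hpy] at hsep
  linarith [h y hy]

end Farkas

theorem Copositive.diag_nonneg {ι : Type*} [Fintype ι] {A : Matrix ι ι ℝ} (hcop : Copositive A)
    (k : ι) : 0 ≤ A k k := by
  classical
  simpa using hcop (Pi.single k 1) fun i => by simp [Pi.single_apply, apply_ite]

section Hyperplane

variable {ι : Type*} [Fintype ι] [DecidableEq ι] {A : Matrix ι ι ℝ} {k : ι}

theorem Copositive.exists_le_forall_sq_dotProduct_le (hcop : Copositive A) (hA : A.IsSymm)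
    (h : ∀ y, y k = 0 → 0 ≤ y ⬝ᵥ A *ᵥ y) :
    ∃ p ≤ Function.update (A k) k 0, ∀ x,
      (p ⬝ᵥ x) ^ 2 ≤ A k k * (Function.update x k 0 ⬝ᵥ A *ᵥ Function.update x k 0) := by
  set D : Matrix ι ι ℝ := diagonal (Function.update 1 k 0)
  have hBx : ∀ x, x ⬝ᵥ (Dᵀ * A * D) *ᵥ x = Function.update x k 0 ⬝ᵥ A *ᵥ Function.update x k 0 :=
    fun x => by rw [dotProduct_transpose_mul_mul_mulVec, diagonal_update_one_mulVec]
  have hB : (Dᵀ * A * D).PosSemidef := by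
    refine .of_dotProduct_mulVec_nonneg ?_ fun x => ?_
    · simp [isHermitian_iff_isSymm, IsSymm, transpose_mul, hA.eq, mul_assoc]
    · rw [star_trivial, hBx]
      exact h _ (Function.update_self k 0 x)
  simp only [← hBx]
  refine hB.exists_le_forall_sq_dotProduct_le (hcop.diag_nonneg k) fun y hy => ?_
  refine neg_sqrt_mul_le_of_forall_nonneg fun t ht => ?_
  have := hcop (Function.update y k t) fun i => by
    by_cases hik : i = k
    · simp [hik, ht]
    · simpa [hik] using hy i
  rw [hA.dotProduct_mulVec_eq_update _ k, Function.update_idem, Function.update_self,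
    update_zero_dotProduct (A k), Function.update_idem, ← update_zero_dotProduct] at this
  rw [hBx]
  linarith

theorem Copositive.isSPN_of_forall_apply_eq_zero_nonneg (hcop : Copositive A) (hA : A.IsSymm)
    (h : ∀ y, y k = 0 → 0 ≤ y ⬝ᵥ A *ᵥ y) : IsSPN A := by
  obtain ⟨p, hpb, hp⟩ := hcop.exists_le_forall_sq_dotProduct_le hA h
  set d := Function.update (A k) k 0 - p
  set N := vecMulVec d (Pi.single k 1) + vecMulVec (Pi.single k 1) d
  have hN : N.IsSymm := by
    simp [N, IsSymm, transpose_vecMulVec, add_comm]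
  refine ⟨A - N, N, .of_dotProduct_mulVec_nonneg ?_ fun x => ?_, hN, fun i j => ?_,
    (sub_add_cancel A N).symm⟩
  · exact isHermitian_iff_isSymm.mpr (hA.sub hN)
  · have hxN : x ⬝ᵥ N *ᵥ x = 2 * x k * (d ⬝ᵥ x) := by
      simp [N, add_mulVec, vecMulVec_mulVec, dotProduct_comm x]
      ring
    rw [star_trivial, sub_mulVec, dotProduct_sub, hxN, hA.dotProduct_mulVec_eq_update x k,
      sub_dotProduct]
    nlinarith [quadratic_nonneg_of_sq_le_mul (h _ (Function.update_self k 0 x))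
      (hcop.diag_nonneg k) (hp x) (x k)]
  · have hd : 0 ≤ d := sub_nonneg.mpr hpb
    have he : (0 : ι → ℝ) ≤ Pi.single k 1 := Pi.single_nonneg.mpr zero_le_one
    exact add_nonneg (mul_nonneg (hd i) (he j)) (mul_nonneg (he i) (hd j))

end Hyperplane

/-- If a copositive symmetric matrix `A` of order `n` has a zero `u`
with at least `n - 2` nonzero entries such that `A * u` has at least `n - 1` zero
entries, then `A` is SPN. -/
theorem copositive_isSPN_of_zero_with_large_support
    (n : ℕ) (A : Matrix (Fin n) (Fin n) ℝ) (hA : A.IsSymm) (hcop : Copositive A)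
    (u : Fin n → ℝ) (hu0 : ∀ i, 0 ≤ u i) (hune : u ≠ 0)
    (huz : u ⬝ᵥ A.mulVec u = 0)
    (hsupp : n - 2 ≤ (Finset.univ.filter fun i => u i ≠ 0).card)
    (hAu : n - 1 ≤ (Finset.univ.filter fun i => A.mulVec u i = 0).card) :
    IsSPN A := by
  have : Nonempty (Fin n) := ⟨(Function.ne_iff.mp hune).choose⟩
  have hzero : (Finset.univ.filter fun i => u i = 0).card ≤ 2 := by
    simpa using
      Finset.card_filter_not_le_of_card_sub_le (p := fun i => u i ≠ 0) (by simpa using hsupp)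
  have hnonzero : (Finset.univ.filter fun i => (A *ᵥ u) i ≠ 0).card ≤ 1 :=
    Finset.card_filter_not_le_of_card_sub_le (by simpa using hAu)
  obtain ⟨k, m, hk, hkm⟩ := Finset.exists_forall_eq_and_forall_eq_or_eq
    (fun i hi => by_contra fun hui => hi (hcop.mulVec_apply_eq_zero_of_zero hA hu0 huz hui))
    hzero hnonzero
  exact hcop.isSPN_of_forall_apply_eq_zero_nonneg (k := k) hA fun y hy =>
    hcop.dotProduct_mulVec_self_nonneg_of_apply_eq_zero hA hu0 huz
      (fun i hik => not_not.mp fun hi => hik (hk i hi)) hkm hy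
end

section
/- Let A be the real symmetric block matrix A = [[M, E], [Eᵀ, B]], where M is symmetric of order r, B is symmetric of order n−r, and E is an r×(n−r) matrix with all entries nonnegative. Then: (i) if M is copositive, A is copositive if and only if B is copositive; (ii) if M is SPN, A is SPN if and only if B is SPN. -/
open Matrix

/-!
Both statements are blockwise. Copositivity and the SPN property pass to principal submatrices,
which gives `A ⇒ B`. Conversely, at `x = (u, v) ≥ 0` the quadratic form of `A` is
`uᵀMu + 2 uᵀEv + vᵀBv`, whose cross term is nonnegative because `E ≥ 0`; and SPN decompositions
`M = P + N`, `B = Q + K` assemble into `A = diag(P, Q) + [[N, E], [Eᵀ, K]]`.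
-/

variable {m n : Type*} [Fintype m] [Fintype n]

theorem Matrix.sumElim_dotProduct_fromBlocks_mulVec_sumElim {α : Type*} [CommSemiring α]
    (A : Matrix m m α) (B : Matrix m n α) (C : Matrix n m α) (D : Matrix n n α)
    (u u' : m → α) (v v' : n → α) :
    Sum.elim u v ⬝ᵥ fromBlocks A B C D *ᵥ Sum.elim u' v' =
      u ⬝ᵥ A *ᵥ u' + u ⬝ᵥ B *ᵥ v' + (v ⬝ᵥ C *ᵥ u' + v ⬝ᵥ D *ᵥ v') := by
  simp only [fromBlocks_mulVec, dotProduct_block, Sum.elim_comp_inl, Sum.elim_comp_inr,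
    dotProduct_add]

open scoped ComplexOrder in
theorem Matrix.PosSemidef.fromBlocks_zero {𝕜 : Type*} [RCLike 𝕜] {A : Matrix m m 𝕜}
    {D : Matrix n n 𝕜} (hA : A.PosSemidef) (hD : D.PosSemidef) :
    (fromBlocks A 0 0 D).PosSemidef := by
  refine .of_dotProduct_mulVec_nonneg (hA.1.fromBlocks (by simp) hD.1) fun x ↦ ?_
  rw [← Sum.elim_comp_inl_inr x, Function.star_sumElim,
    sumElim_dotProduct_fromBlocks_mulVec_sumElim]
  simpa using add_nonneg (hA.dotProduct_mulVec_nonneg _) (hD.dotProduct_mulVec_nonneg _)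

theorem Matrix.mulVec_nonneg {m : Type*} {E : Matrix m n ℝ} {v : n → ℝ} (hE : ∀ i j, 0 ≤ E i j)
    (hv : 0 ≤ v) : 0 ≤ E *ᵥ v :=
  fun i ↦ Finset.sum_nonneg fun j _ ↦ mul_nonneg (hE i j) (hv j)

theorem Copositive.toBlocks₂₂ {A : Matrix (m ⊕ n) (m ⊕ n) ℝ} (hA : Copositive A) :
    Copositive A.toBlocks₂₂ := by
  intro v hv
  have h := hA (Sum.elim 0 v) (by rintro (i | i) <;> simp [hv])
  rw [← fromBlocks_toBlocks A, sumElim_dotProduct_fromBlocks_mulVec_sumElim] at h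
  simpa using h

theorem Copositive.fromBlocks {A : Matrix m m ℝ} {B : Matrix m n ℝ} {C : Matrix n m ℝ}
    {D : Matrix n n ℝ} (hA : Copositive A) (hD : Copositive D) (hB : ∀ i j, 0 ≤ B i j)
    (hC : ∀ i j, 0 ≤ C i j) : Copositive (fromBlocks A B C D) := by
  intro x hx
  have hu : 0 ≤ x ∘ Sum.inl := fun i ↦ hx _
  have hv : 0 ≤ x ∘ Sum.inr := fun i ↦ hx _
  rw [← Sum.elim_comp_inl_inr x, sumElim_dotProduct_fromBlocks_mulVec_sumElim]
  have hBv := dotProduct_nonneg_of_nonneg hu (mulVec_nonneg hB hv)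
  have hCu := dotProduct_nonneg_of_nonneg hv (mulVec_nonneg hC hu)
  exact add_nonneg (add_nonneg (hA _ hu) hBv) (add_nonneg hCu (hD _ hv))

theorem IsSPN.submatrix {A : Matrix m m ℝ} (hA : IsSPN A) (e : n → m) :
    IsSPN (A.submatrix e e) := by
  obtain ⟨P, N, hP, hN, hN₀, rfl⟩ := hA
  exact ⟨P.submatrix e e, N.submatrix e e, hP.submatrix e, hN.submatrix e,
    fun i j ↦ hN₀ _ _, congr_fun₂ (submatrix_add P N) e e⟩

theorem IsSPN.fromBlocks {A : Matrix m m ℝ} {B : Matrix m n ℝ} {D : Matrix n n ℝ}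
    (hA : IsSPN A) (hD : IsSPN D) (hB : ∀ i j, 0 ≤ B i j) : IsSPN (fromBlocks A B Bᵀ D) := by
  obtain ⟨P, N, hP, hN, hN₀, rfl⟩ := hA
  obtain ⟨Q, K, hQ, hK, hK₀, rfl⟩ := hD
  refine ⟨Matrix.fromBlocks P 0 0 Q, Matrix.fromBlocks N B Bᵀ K, hP.fromBlocks_zero hQ, ?_, ?_,
    by simp [fromBlocks_add]⟩
  · rw [IsSymm, fromBlocks_transpose, hN.eq, hK.eq, transpose_transpose]
  · rintro (i | i) (j | j)
    exacts [hN₀ i j, hB i j, hB j i, hK₀ i j]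

theorem fromBlocks_copositive_and_isSPN_iff_of_nonneg_offdiag_block_general
    (r s : ℕ) (M : Matrix (Fin r) (Fin r) ℝ) (B : Matrix (Fin s) (Fin s) ℝ)
    (E : Matrix (Fin r) (Fin s) ℝ) (hE : ∀ i j, 0 ≤ E i j) :
    (Copositive M → (Copositive (Matrix.fromBlocks M E Eᵀ B) ↔ Copositive B)) ∧
    (IsSPN M → (IsSPN (Matrix.fromBlocks M E Eᵀ B) ↔ IsSPN B)) :=
  ⟨fun hM ↦ ⟨fun h ↦ by simpa using h.toBlocks₂₂,
      fun hB ↦ hM.fromBlocks hB hE fun i j ↦ hE j i⟩,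
    fun hM ↦ ⟨fun h ↦ h.submatrix Sum.inr, fun hB ↦ hM.fromBlocks hB hE⟩⟩

/-- For a symmetric block matrix `A = [[M, E], [Eᵀ, B]]` with `E ≥ 0`:
if `M` is copositive then `A` is copositive iff `B` is copositive, and
if `M` is SPN then `A` is SPN iff `B` is SPN. -/
theorem fromBlocks_copositive_and_isSPN_iff_of_nonneg_offdiag_block
    (r s : ℕ) (M : Matrix (Fin r) (Fin r) ℝ) (B : Matrix (Fin s) (Fin s) ℝ)
    (E : Matrix (Fin r) (Fin s) ℝ) (hM : M.IsSymm) (hB : B.IsSymm)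
    (hE : ∀ i j, 0 ≤ E i j) :
    (Copositive M → (Copositive (Matrix.fromBlocks M E Eᵀ B) ↔ Copositive B)) ∧
    (IsSPN M → (IsSPN (Matrix.fromBlocks M E Eᵀ B) ↔ IsSPN B)) :=
  fromBlocks_copositive_and_isSPN_iff_of_nonneg_offdiag_block_general r s M B E hE
end

section
/- Let A be the real symmetric block matrix A = [[M, E], [Eᵀ, B]], where M is a symmetric positive definite matrix of order r all of whose off-diagonal entries are nonpositive (equivalently, M is a nonsingular symmetric M-matrix), B is symmetric of order n−r, and E is an r×(n−r) matrix with all entries nonpositive. Let A/M = B − EᵀM⁻¹E denote the Schur complement of M in A. Then: (i) A is copositive if and only if A/M is copositive; (ii) A is SPN if and only if A/M is SPN. -/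
open Matrix

/-!
Put `F = -M⁻¹E`. A nonsingular symmetric M-matrix has an entrywise nonnegative inverse, so `F ≥ 0`
and the nonnegative matrix `C = [F; 1]` satisfies `Cᵀ A C = A/M`. Conversely, `A` is the sum of the
positive semidefinite matrix `[[M, E], [Eᵀ, EᵀM⁻¹E]]` and the padding `[[0, 0], [0, A/M]]`, which is
again a congruence of `A/M` by a nonnegative matrix. Both copositivity and the SPN property survive
congruence by entrywise nonnegative matrices and the addition of positive semidefinite matrices.
-/

namespace Matrix

section Nonneg

variable {l m n α : Type*} [Fintype m] [Semiring α] [PartialOrder α] [IsOrderedRing α]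

theorem mul_apply_nonneg {A : Matrix l m α} {B : Matrix m n α} (hA : ∀ i j, 0 ≤ A i j)
    (hB : ∀ i j, 0 ≤ B i j) (i : l) (j : n) : 0 ≤ (A * B) i j :=
  Finset.sum_nonneg fun k _ => mul_nonneg (hA i k) (hB k j)

theorem mulVec_nonneg_s3 {A : Matrix l m α} {v : m → α} (hA : ∀ i j, 0 ≤ A i j) (hv : 0 ≤ v) :
    0 ≤ A *ᵥ v :=
  fun i => Finset.sum_nonneg fun k _ => mul_nonneg (hA i k) (hv k)

end Nonneg

variable {ι : Type*} [Fintype ι]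

theorem dotProduct_mulVec_nonpos_of_offDiag_nonpos {M : Matrix ι ι ℝ}
    (hM : ∀ i j, i ≠ j → M i j ≤ 0) {u v : ι → ℝ} (hu : 0 ≤ u) (hv : 0 ≤ v)
    (huv : ∀ i, u i * v i = 0) : u ⬝ᵥ M *ᵥ v ≤ 0 := by
  simp only [dotProduct, mulVec, Finset.mul_sum]
  refine Finset.sum_nonpos fun i _ => Finset.sum_nonpos fun j _ => ?_
  rcases eq_or_ne i j with rfl | hij
  · rw [mul_left_comm, huv, mul_zero]
  · exact mul_nonpos_of_nonneg_of_nonpos (hu i)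
      (mul_nonpos_of_nonpos_of_nonneg (hM i j hij) (hv j))

theorem PosDef.inv_mulVec_nonneg_of_offDiag_nonpos [DecidableEq ι] {M : Matrix ι ι ℝ}
    (hM : M.PosDef) (hMoff : ∀ i j, i ≠ j → M i j ≤ 0) {b : ι → ℝ} (hb : 0 ≤ b) :
    0 ≤ M⁻¹ *ᵥ b := by
  set x := M⁻¹ *ᵥ b
  have hMx : M *ᵥ x = b := by
    rw [mulVec_mulVec, mul_nonsing_inv _ ((isUnit_iff_isUnit_det M).mp hM.isUnit), one_mulVec]
  have hcross : x⁻ ⬝ᵥ M *ᵥ x⁺ ≤ 0 := by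
    refine dotProduct_mulVec_nonpos_of_offDiag_nonpos hMoff (negPart_nonneg x)
      (posPart_nonneg x) fun i => ?_
    rcases le_total 0 (x i) with hi | hi
    · simp [negPart_eq_zero.mpr hi]
    · simp [posPart_eq_zero.mpr hi]
  have hquad : x⁻ ⬝ᵥ M *ᵥ x⁻ ≤ 0 := by
    have hsplit : x⁻ ⬝ᵥ M *ᵥ x⁻ = x⁻ ⬝ᵥ M *ᵥ x⁺ - x⁻ ⬝ᵥ b := by
      have hx : x⁺ - x = x⁻ := by linear_combination posPart_sub_negPart x
      rw [← hMx, ← dotProduct_sub, ← mulVec_sub, hx]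
    have hb' : 0 ≤ x⁻ ⬝ᵥ b := Finset.sum_nonneg fun i _ => mul_nonneg (negPart_nonneg x i) (hb i)
    linarith
  have hneg : x⁻ = 0 := by
    by_contra hne
    simpa using (hM.dotProduct_mulVec_pos hne).trans_le hquad
  exact negPart_eq_zero.mp hneg

theorem PosDef.inv_mul_nonneg_of_offDiag_nonpos {κ : Type*} [DecidableEq ι] {M : Matrix ι ι ℝ}
    (hM : M.PosDef) (hMoff : ∀ i j, i ≠ j → M i j ≤ 0) {N : Matrix ι κ ℝ}
    (hN : ∀ i j, 0 ≤ N i j) (i : ι) (j : κ) : 0 ≤ (M⁻¹ * N) i j :=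
  hM.inv_mulVec_nonneg_of_offDiag_nonpos hMoff (b := fun k => N k j) (fun k => hN k j) i

theorem transpose_fromRows_mul_fromBlocks_mul_fromRows {l m α : Type*} [Fintype l] [DecidableEq l]
    [Fintype m] [DecidableEq m] [CommRing α] (A : Matrix l l α) (B : Matrix l m α)
    (C : Matrix m l α) (D : Matrix m m α) (hA : IsUnit A.det) :
    (fromRows (-(A⁻¹ * B)) (1 : Matrix m m α))ᵀ * fromBlocks A B C D *
        fromRows (-(A⁻¹ * B)) (1 : Matrix m m α) = D - C * A⁻¹ * B := by
  rw [Matrix.mul_assoc, fromBlocks_mul_fromRows, Matrix.mul_neg, ← Matrix.mul_assoc,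
    mul_nonsing_inv _ hA]
  simp [transpose_fromRows, fromCols_mul_fromRows, Matrix.mul_assoc, sub_eq_neg_add]

theorem transpose_fromCols_zero_one_mul_mul {m n α : Type*} [Fintype n] [DecidableEq n]
    [Semiring α] (X : Matrix n n α) :
    (fromCols (0 : Matrix n m α) (1 : Matrix n n α))ᵀ * X * fromCols (0 : Matrix n m α) 1 =
      fromBlocks 0 0 0 X := by
  rw [transpose_fromCols, fromRows_mul, fromRows_mul_fromCols]
  simp

theorem PosDef.posSemidef_fromBlocks_schur_zero {m n K : Type*} [Fintype m] [DecidableEq m]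
    [Fintype n] [Field K] [PartialOrder K] [StarRing K] [StarOrderedRing K] {A : Matrix m m K}
    (hA : A.PosDef) (B : Matrix m n K) : (fromBlocks A B Bᴴ (Bᴴ * A⁻¹ * B)).PosSemidef := by
  have := hA.isUnit.invertible
  exact (hA.fromBlocks₁₁ B _).mpr (by simpa using PosSemidef.zero)

end Matrix

section Cone

variable {ι κ : Type*} [Fintype ι] [Fintype κ]

theorem Matrix.PosSemidef.copositive {A : Matrix ι ι ℝ} (hA : A.PosSemidef) :
    Copositive A :=
  fun x _ => by simpa using hA.dotProduct_mulVec_nonneg x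

theorem Copositive.add {A B : Matrix ι ι ℝ} (hA : Copositive A) (hB : Copositive B) :
    Copositive (A + B) := fun x hx => by
  rw [add_mulVec, dotProduct_add]
  exact add_nonneg (hA x hx) (hB x hx)

theorem Copositive.transpose_mul_mul_same {A : Matrix ι ι ℝ} (hA : Copositive A)
    {C : Matrix ι κ ℝ} (hC : ∀ i j, 0 ≤ C i j) : Copositive (Cᵀ * A * C) := fun x hx => by
  simpa [← mulVec_mulVec, dotProduct_mulVec, vecMul_transpose] using
    hA _ (mulVec_nonneg_s3 hC hx)

theorem Matrix.PosSemidef.isSPN {A : Matrix ι ι ℝ} (hA : A.PosSemidef) : IsSPN A :=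
  ⟨A, 0, hA, isSymm_zero, fun _ _ => le_rfl, (add_zero A).symm⟩

theorem IsSPN.add {A B : Matrix ι ι ℝ} (hA : IsSPN A) (hB : IsSPN B) : IsSPN (A + B) := by
  obtain ⟨P, N, hP, hN, hN0, rfl⟩ := hA
  obtain ⟨P', N', hP', hN', hN0', rfl⟩ := hB
  exact ⟨P + P', N + N', hP.add hP', hN.add hN', fun i j => add_nonneg (hN0 i j) (hN0' i j),
    by abel⟩

theorem IsSPN.transpose_mul_mul_same {A : Matrix ι ι ℝ} (hA : IsSPN A)
    {C : Matrix ι κ ℝ} (hC : ∀ i j, 0 ≤ C i j) : IsSPN (Cᵀ * A * C) := by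
  obtain ⟨P, N, hP, hN, hN0, rfl⟩ := hA
  refine ⟨Cᵀ * P * C, Cᵀ * N * C, by simpa using hP.conjTranspose_mul_mul_same C, ?_,
    mul_apply_nonneg (mul_apply_nonneg (fun i j => hC j i) hN0) hC, by
      rw [Matrix.mul_add, Matrix.add_mul]⟩
  simp [IsSymm, transpose_mul, hN.eq, Matrix.mul_assoc]

end Cone

theorem fromBlocks_copositive_and_isSPN_iff_schur_of_Mmatrix_block_general
    (r s : ℕ) (M : Matrix (Fin r) (Fin r) ℝ) (B : Matrix (Fin s) (Fin s) ℝ)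
    (E : Matrix (Fin r) (Fin s) ℝ) (hM : M.PosDef)
    (hMoff : ∀ i j, i ≠ j → M i j ≤ 0)
    (hE : ∀ i j, E i j ≤ 0) :
    (Copositive (Matrix.fromBlocks M E Eᵀ B) ↔ Copositive (B - Eᵀ * M⁻¹ * E)) ∧
    (IsSPN (Matrix.fromBlocks M E Eᵀ B) ↔ IsSPN (B - Eᵀ * M⁻¹ * E)) := by
  set C := fromRows (-(M⁻¹ * E)) (1 : Matrix (Fin s) (Fin s) ℝ)
  set J := fromCols (0 : Matrix (Fin s) (Fin r) ℝ) (1 : Matrix (Fin s) (Fin s) ℝ)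
  have hC : ∀ i j, 0 ≤ C i j := by
    rintro (i | i) j
    · have hE' : ∀ i j, 0 ≤ (-E) i j := fun i j => neg_nonneg.mpr (hE i j)
      simpa [C, ← Matrix.mul_neg] using hM.inv_mul_nonneg_of_offDiag_nonpos hMoff hE' i j
    · simp [C, one_apply, apply_ite]
  have hJ : ∀ i j, 0 ≤ J i j := by
    rintro i (j | j) <;> simp [J, one_apply, apply_ite]
  have hschur : Cᵀ * fromBlocks M E Eᵀ B * C = B - Eᵀ * M⁻¹ * E :=
    transpose_fromRows_mul_fromBlocks_mul_fromRows M E Eᵀ B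
      ((isUnit_iff_isUnit_det M).mp hM.isUnit)
  have hpad : fromBlocks M E Eᵀ B =
      fromBlocks M E Eᵀ (Eᵀ * M⁻¹ * E) + Jᵀ * (B - Eᵀ * M⁻¹ * E) * J := by
    rw [transpose_fromCols_zero_one_mul_mul, fromBlocks_add]
    simp
  have hK : (fromBlocks M E Eᵀ (Eᵀ * M⁻¹ * E)).PosSemidef := by
    simpa using hM.posSemidef_fromBlocks_schur_zero E
  refine ⟨⟨fun h => hschur ▸ h.transpose_mul_mul_same hC,
      fun h => hpad ▸ hK.copositive.add (h.transpose_mul_mul_same hJ)⟩,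
    ⟨fun h => hschur ▸ h.transpose_mul_mul_same hC,
      fun h => hpad ▸ hK.isSPN.add (h.transpose_mul_mul_same hJ)⟩⟩

/-- For a symmetric block matrix `A = [[M, E], [Eᵀ, B]]` where `M` is a
nonsingular symmetric M-matrix (positive definite with nonpositive off-diagonal
entries) and `E ≤ 0`: `A` is copositive iff the Schur complement `A/M = B - EᵀM⁻¹E`
is copositive, and `A` is SPN iff `A/M` is SPN. -/
theorem fromBlocks_copositive_and_isSPN_iff_schur_of_Mmatrix_block
    (r s : ℕ) (M : Matrix (Fin r) (Fin r) ℝ) (B : Matrix (Fin s) (Fin s) ℝ)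
    (E : Matrix (Fin r) (Fin s) ℝ) (hM : M.PosDef)
    (hMoff : ∀ i j, i ≠ j → M i j ≤ 0)
    (hB : B.IsSymm) (hE : ∀ i j, E i j ≤ 0) :
    (Copositive (Matrix.fromBlocks M E Eᵀ B) ↔ Copositive (B - Eᵀ * M⁻¹ * E)) ∧
    (IsSPN (Matrix.fromBlocks M E Eᵀ B) ↔ IsSPN (B - Eᵀ * M⁻¹ * E)) :=
  fromBlocks_copositive_and_isSPN_iff_schur_of_Mmatrix_block_general r s M B E hM hMoff hE
end

section
/- Let A be a real symmetric copositive matrix of order n whose graph G(A) is the union of two graphs G₁ and G₂ with V(G₁) ∪ V(G₂) = {1,…,n} and V(G₁) ∩ V(G₂) equal to a single vertex (so there are no edges between V(G₁) and V(G₂) other than through this common vertex). Then there exist copositive matrices A₁ indexed by V(G₁) and A₂ indexed by V(G₂) with G(A₁) = G₁ and G(A₂) = G₂, such that A equals the sum of A₁ and A₂ after extending each by zeros to an n×n matrix (i.e., A = (A₁ ⊕ 0) + (0 ⊕ A₂) under a simultaneous ordering where the common vertex is the overlap index). -/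
open Matrix

section aux
variable {n : ℕ}

lemma quad_expand (B : Matrix (Fin n) (Fin n) ℝ) (x : Fin n → ℝ) :
    x ⬝ᵥ B.mulVec x = ∑ i, ∑ j, x i * B i j * x j := by
  simp [dotProduct, mulVec, Finset.mul_sum, mul_assoc]

lemma quad_congr (B : Matrix (Fin n) (Fin n) ℝ) (S : Set (Fin n))
    (hB : ∀ i j, i ∉ S ∨ j ∉ S → B i j = 0) (x y : Fin n → ℝ)
    (h : ∀ i ∈ S, x i = y i) :
    x ⬝ᵥ B.mulVec x = y ⬝ᵥ B.mulVec y := by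
  rw [quad_expand, quad_expand]
  refine Finset.sum_congr rfl fun i _ => Finset.sum_congr rfl fun j _ => ?_
  by_cases hi : i ∈ S
  · by_cases hj : j ∈ S
    · rw [h i hi, h j hj]
    · rw [hB i j (Or.inr hj)]; ring
  · rw [hB i j (Or.inl hi)]; ring

lemma quad_smul (B : Matrix (Fin n) (Fin n) ℝ) (c : ℝ) (x : Fin n → ℝ) :
    (c • x) ⬝ᵥ B.mulVec (c • x) = c^2 * (x ⬝ᵥ B.mulVec x) := by
  rw [quad_expand, quad_expand, Finset.mul_sum]
  refine Finset.sum_congr rfl fun i _ => ?_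
  rw [Finset.mul_sum]
  refine Finset.sum_congr rfl fun j _ => ?_
  simp only [Pi.smul_apply, smul_eq_mul]; ring

lemma quad_E (v : Fin n) (E : Matrix (Fin n) (Fin n) ℝ)
    (hE : ∀ i j, E i j = if i = v ∧ j = v then (1:ℝ) else 0) (x : Fin n → ℝ) :
    x ⬝ᵥ E.mulVec x = x v * x v := by
  rw [quad_expand]
  simp only [hE]
  rw [Finset.sum_eq_single v]
  · rw [Finset.sum_eq_single v]
    · simp
    · intro j _ hj; simp [hj]
    · simp
  · intro i _ hi
    apply Finset.sum_eq_zero; intro j _; simp [hi]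
  · simp

lemma quad_add (B C : Matrix (Fin n) (Fin n) ℝ) (x : Fin n → ℝ) :
    x ⬝ᵥ (B + C).mulVec x = x ⬝ᵥ B.mulVec x + x ⬝ᵥ C.mulVec x := by
  rw [add_mulVec, dotProduct_add]

lemma quad_msmul (B : Matrix (Fin n) (Fin n) ℝ) (c : ℝ) (x : Fin n → ℝ) :
    x ⬝ᵥ (c • B).mulVec x = c * (x ⬝ᵥ B.mulVec x) := by
  rw [smul_mulVec, dotProduct_smul, smul_eq_mul]

lemma copos_of_bound (S : Set (Fin n)) (v : Fin n) (hv : v ∈ S)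
    (B E : Matrix (Fin n) (Fin n) ℝ)
    (hE : ∀ i j, E i j = if i = v ∧ j = v then (1:ℝ) else 0)
    (hB : ∀ i j, i ∉ S ∨ j ∉ S → B i j = 0) (t : ℝ)
    (h0 : ∀ x : Fin n → ℝ, (∀ i, 0 ≤ x i) → (∀ i, i ∉ S → x i = 0) → x v = 0 →
      0 ≤ x ⬝ᵥ B.mulVec x)
    (h1 : ∀ x : Fin n → ℝ, (∀ i, 0 ≤ x i) → (∀ i, i ∉ S → x i = 0) → x v = 1 →
      -(x ⬝ᵥ B.mulVec x) ≤ t) :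
    Copositive (B + t • E) := by
  classical
  intro x hx
  rw [quad_add, quad_msmul, quad_E v E hE]
  set y : Fin n → ℝ := fun i => if i ∈ S then x i else 0 with hy
  have hyB : x ⬝ᵥ B.mulVec x = y ⬝ᵥ B.mulVec y :=
    quad_congr B S hB x y (fun i hi => by simp [hy, hi])
  have hy0 : ∀ i, 0 ≤ y i := fun i => by
    simp only [hy]; split
    · exact hx i
    · exact le_refl 0
  have hyS : ∀ i, i ∉ S → y i = 0 := fun i hi => by simp [hy, hi]
  have hyv : y v = x v := by simp [hy, hv]
  rw [hyB]
  rcases eq_or_lt_of_le (hx v) with hv0 | hv0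
  · have h := h0 y hy0 hyS (by rw [hyv, ← hv0])
    rw [← hv0]
    simpa using h
  · set c := x v with hc
    have hcpos : (0:ℝ) < c := hv0
    have hz0 : ∀ i, 0 ≤ (c⁻¹ • y) i := fun i => by
      have := hy0 i
      have : 0 ≤ c⁻¹ * y i := mul_nonneg (by positivity) this
      simpa using this
    have hzS : ∀ i, i ∉ S → (c⁻¹ • y) i = 0 := fun i hi => by
      simp [hyS i hi]
    have hzv : (c⁻¹ • y) v = 1 := by
      simp [hyv, ← hc]
      field_simp
    have h := h1 (c⁻¹ • y) hz0 hzS hzv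
    rw [quad_smul] at h
    have hc2 : (0:ℝ) < c^2 := by positivity
    have := mul_le_mul_of_nonneg_left h (le_of_lt hc2)
    rw [mul_neg] at this
    have hinv : c^2 * ((c⁻¹)^2 * (y ⬝ᵥ B.mulVec y)) = y ⬝ᵥ B.mulVec y := by
      field_simp
    rw [hinv] at this
    nlinarith
end aux

/-- If the graph of a copositive symmetric matrix `A` is the union of two
graphs with vertex sets `S₁`, `S₂` sharing exactly one vertex `v` (and no edges between
`S₁ \ {v}` and `S₂ \ {v}`), then `A = (A₁ ⊕ 0) + (0 ⊕ A₂)` for copositive matrices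
`A₁`, `A₂` supported on `S₁ × S₁` and `S₂ × S₂` whose graphs are `G₁` and `G₂`
respectively (their off-diagonal entries agree with those of `A`). -/
theorem copositive_decomposition_of_cut_vertex
    (n : ℕ) (A : Matrix (Fin n) (Fin n) ℝ) (hA : A.IsSymm) (hcop : Copositive A)
    (S₁ S₂ : Set (Fin n)) (v : Fin n)
    (hunion : S₁ ∪ S₂ = Set.univ) (hinter : S₁ ∩ S₂ = {v})
    (hedges : ∀ i j, i ≠ j → A i j ≠ 0 → (i ∈ S₁ ∧ j ∈ S₁) ∨ (i ∈ S₂ ∧ j ∈ S₂)) :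
    ∃ A₁ A₂ : Matrix (Fin n) (Fin n) ℝ,
      A₁.IsSymm ∧ A₂.IsSymm ∧ Copositive A₁ ∧ Copositive A₂ ∧
      A = A₁ + A₂ ∧
      (∀ i j, (i ∉ S₁ ∨ j ∉ S₁) → A₁ i j = 0) ∧
      (∀ i j, (i ∉ S₂ ∨ j ∉ S₂) → A₂ i j = 0) ∧
      (∀ i j, i ≠ j → i ∈ S₁ → j ∈ S₁ → A₁ i j = A i j) ∧
      (∀ i j, i ≠ j → i ∈ S₂ → j ∈ S₂ → A₂ i j = A i j) := by
  classical
  have hv1 : v ∈ S₁ := by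
    have : v ∈ S₁ ∩ S₂ := by rw [hinter]; rfl
    exact this.1
  have hv2 : v ∈ S₂ := by
    have : v ∈ S₁ ∩ S₂ := by rw [hinter]; rfl
    exact this.2
  have honly : ∀ i, i ∈ S₁ → i ∈ S₂ → i = v := fun i h1 h2 => by
    have : i ∈ S₁ ∩ S₂ := ⟨h1, h2⟩
    rw [hinter] at this; exact this
  have hall : ∀ i : Fin n, i ∈ S₁ ∨ i ∈ S₂ := fun i => by
    have : i ∈ S₁ ∪ S₂ := by rw [hunion]; trivial
    exact this
  have hAs : ∀ i j, A j i = A i j := fun i j => by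
    conv_lhs => rw [← hA]
    rfl
  set E : Matrix (Fin n) (Fin n) ℝ :=
    Matrix.of (fun i j => if i = v ∧ j = v then (1:ℝ) else 0) with hEdef
  have hE : ∀ i j, E i j = if i = v ∧ j = v then (1:ℝ) else 0 := fun i j => rfl
  set B₁ : Matrix (Fin n) (Fin n) ℝ :=
    Matrix.of (fun i j => if i ∈ S₁ ∧ j ∈ S₁ ∧ ¬(i = v ∧ j = v) then A i j else 0) with hB₁def
  have hB₁ : ∀ i j, B₁ i j = if i ∈ S₁ ∧ j ∈ S₁ ∧ ¬(i = v ∧ j = v) then A i j else 0 :=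
    fun i j => rfl
  set B₂ : Matrix (Fin n) (Fin n) ℝ :=
    Matrix.of (fun i j => if i ∈ S₂ ∧ j ∈ S₂ ∧ ¬(i = v ∧ j = v) then A i j else 0) with hB₂def
  have hB₂ : ∀ i j, B₂ i j = if i ∈ S₂ ∧ j ∈ S₂ ∧ ¬(i = v ∧ j = v) then A i j else 0 :=
    fun i j => rfl
  have hsupp₁ : ∀ i j, i ∉ S₁ ∨ j ∉ S₁ → B₁ i j = 0 := by
    intro i j h; rw [hB₁]; rw [if_neg]; tauto
  have hsupp₂ : ∀ i j, i ∉ S₂ ∨ j ∉ S₂ → B₂ i j = 0 := by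
    intro i j h; rw [hB₂]; rw [if_neg]; tauto
  -- the key decomposition
  have hdecomp : A = B₁ + B₂ + (A v v) • E := by
    ext i j
    simp only [Matrix.add_apply, Matrix.smul_apply, smul_eq_mul, hB₁, hB₂, hE]
    by_cases hij : i = v ∧ j = v
    · obtain ⟨hi, hj⟩ := hij; subst hi; subst hj
      simp
    · rw [if_neg hij, mul_zero, add_zero]
      by_cases h1 : i ∈ S₁ ∧ j ∈ S₁
      · have h2 : ¬(i ∈ S₂ ∧ j ∈ S₂) := by
          rintro ⟨a, b⟩; exact hij ⟨honly i h1.1 a, honly j h1.2 b⟩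
        rw [if_pos ⟨h1.1, h1.2, hij⟩, if_neg (by tauto)]
        ring
      · by_cases h2 : i ∈ S₂ ∧ j ∈ S₂
        · rw [if_neg (by tauto), if_pos ⟨h2.1, h2.2, hij⟩]; ring
        · have hne : i ≠ j := by
            rintro rfl
            rcases hall i with h | h
            · exact h1 ⟨h, h⟩
            · exact h2 ⟨h, h⟩
          have hz : A i j = 0 := by
            by_contra h
            rcases hedges i j hne h with h | h
            · exact h1 h
            · exact h2 h
          rw [if_neg (by tauto), if_neg (by tauto), hz]; ring
  -- the sets of values
  set T₁ : Set ℝ := {r : ℝ | ∃ x : Fin n → ℝ, (∀ i, 0 ≤ x i) ∧ (∀ i, i ∉ S₁ → x i = 0) ∧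
    x v = 1 ∧ r = -(x ⬝ᵥ B₁.mulVec x)} with hT₁
  set T₂ : Set ℝ := {r : ℝ | ∃ x : Fin n → ℝ, (∀ i, 0 ≤ x i) ∧ (∀ i, i ∉ S₂ → x i = 0) ∧
    x v = 1 ∧ r = -(x ⬝ᵥ B₂.mulVec x)} with hT₂
  -- e_v witnesses 0 ∈ T₁ and 0 ∈ T₂
  have hsingle : ∀ (B : Matrix (Fin n) (Fin n) ℝ),
      (fun i => if i = v then (1:ℝ) else 0) ⬝ᵥ B.mulVec (fun i => if i = v then (1:ℝ) else 0)
        = B v v := by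
    intro B
    rw [quad_expand]
    rw [Finset.sum_eq_single v]
    · rw [Finset.sum_eq_single v]
      · simp
      · intro j _ hj; simp [hj]
      · simp
    · intro i _ hi; apply Finset.sum_eq_zero; intro j _; simp [hi]
    · simp
  have h0T₁ : (0:ℝ) ∈ T₁ := by
    refine ⟨fun i => if i = v then 1 else 0, fun i => by positivity,
      fun i hi => if_neg (fun h : i = v => hi (by rw [h]; exact hv1)), by simp, ?_⟩
    rw [hsingle, hB₁]
    simp
  have h0T₂ : (0:ℝ) ∈ T₂ := by
    refine ⟨fun i => if i = v then 1 else 0, fun i => by positivity,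
      fun i hi => if_neg (fun h : i = v => hi (by rw [h]; exact hv2)), by simp, ?_⟩
    rw [hsingle, hB₂]
    simp
  -- the key inequality
  have hkey : ∀ a ∈ T₁, ∀ b ∈ T₂, a + b ≤ A v v := by
    rintro a ⟨x, hx0, hxS, hxv, rfl⟩ b ⟨y, hy0, hyS, hyv, rfl⟩
    set z : Fin n → ℝ := fun i => if i = v then 1 else x i + y i with hz
    have hz0 : ∀ i, 0 ≤ z i := fun i => by
      simp only [hz]; split
      · exact zero_le_one
      · exact add_nonneg (hx0 i) (hy0 i)
    have hzx : ∀ i ∈ S₁, z i = x i := by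
      intro i hi
      simp only [hz]
      by_cases h : i = v
      · subst h; simp [hxv]
      · rw [if_neg h]
        have : i ∉ S₂ := fun hc => h (honly i hi hc)
        rw [hyS i this, add_zero]
    have hzy : ∀ i ∈ S₂, z i = y i := by
      intro i hi
      simp only [hz]
      by_cases h : i = v
      · subst h; simp [hyv]
      · rw [if_neg h]
        have : i ∉ S₁ := fun hc => h (honly i hc hi)
        rw [hxS i this, zero_add]
    have hq := hcop z hz0
    rw [hdecomp, quad_add, quad_add, quad_msmul, quad_E v E hE] at hq
    rw [quad_congr B₁ S₁ hsupp₁ z x hzx, quad_congr B₂ S₂ hsupp₂ z y hzy] at hq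
    have hzv : z v = 1 := by simp [hz]
    rw [hzv] at hq
    nlinarith [hq]
  have hbdd : BddAbove T₁ := ⟨A v v, fun a ha => by
    have := hkey a ha 0 h0T₂; linarith⟩
  set t₁ : ℝ := sSup T₁ with ht₁
  have hub₁ : ∀ a ∈ T₁, a ≤ t₁ := fun a ha => le_csSup hbdd ha
  have hub₂ : ∀ b ∈ T₂, b ≤ A v v - t₁ := by
    intro b hb
    have : t₁ ≤ A v v - b := csSup_le ⟨0, h0T₁⟩ (fun a ha => by linarith [hkey a ha b hb])
    linarith
  -- diagonal-only quadratic form vanishing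
  have hvanish : ∀ (B : Matrix (Fin n) (Fin n) ℝ) (S : Set (Fin n)),
      (∀ i j, i ∉ S ∨ j ∉ S → B i j = 0) →
      ∀ x : Fin n → ℝ, (∀ i ∈ S, x i = 0) → x ⬝ᵥ B.mulVec x = 0 := by
    intro B S hB x hx
    rw [quad_congr B S hB x (fun _ => 0) hx]
    simp [dotProduct]
  -- copositivity of the pieces
  have hcop₁ : Copositive (B₁ + t₁ • E) := by
    apply copos_of_bound S₁ v hv1 B₁ E hE hsupp₁ t₁
    · intro x hx0 hxS hxv
      have hq := hcop x hx0
      rw [hdecomp, quad_add, quad_add, quad_msmul, quad_E v E hE] at hq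
      have h2 : x ⬝ᵥ B₂.mulVec x = 0 := by
        apply hvanish B₂ S₂ hsupp₂
        intro i hi
        by_cases h : i = v
        · exact h ▸ hxv
        · exact hxS i (fun hc => h (honly i hc hi))
      rw [h2, hxv] at hq
      linarith
    · intro x hx0 hxS hxv
      exact hub₁ _ ⟨x, hx0, hxS, hxv, rfl⟩
  have hcop₂ : Copositive (B₂ + (A v v - t₁) • E) := by
    apply copos_of_bound S₂ v hv2 B₂ E hE hsupp₂ (A v v - t₁)
    · intro x hx0 hxS hxv
      have hq := hcop x hx0
      rw [hdecomp, quad_add, quad_add, quad_msmul, quad_E v E hE] at hq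
      have h2 : x ⬝ᵥ B₁.mulVec x = 0 := by
        apply hvanish B₁ S₁ hsupp₁
        intro i hi
        by_cases h : i = v
        · exact h ▸ hxv
        · exact hxS i (fun hc => h (honly i hi hc))
      rw [h2, hxv] at hq
      linarith
    · intro x hx0 hxS hxv
      exact hub₂ _ ⟨x, hx0, hxS, hxv, rfl⟩
  refine ⟨B₁ + t₁ • E, B₂ + (A v v - t₁) • E, ?_, ?_, hcop₁, hcop₂, ?_, ?_, ?_, ?_, ?_⟩
  · -- symmetry of A₁
    ext i j
    simp only [Matrix.transpose_apply, Matrix.add_apply, Matrix.smul_apply, smul_eq_mul,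
      hB₁, hE]
    have hif : (if j = v ∧ i = v then (1:ℝ) else 0) = (if i = v ∧ j = v then (1:ℝ) else 0) :=
      if_congr and_comm rfl rfl
    rw [hif]
    by_cases h : i ∈ S₁ ∧ j ∈ S₁ ∧ ¬(i = v ∧ j = v)
    · rw [if_pos ⟨h.2.1, h.1, fun hc => h.2.2 ⟨hc.2, hc.1⟩⟩, if_pos h, hAs i j]
    · rw [if_neg (fun hc => h ⟨hc.2.1, hc.1, fun hd => hc.2.2 ⟨hd.2, hd.1⟩⟩), if_neg h]
  · ext i j
    simp only [Matrix.transpose_apply, Matrix.add_apply, Matrix.smul_apply, smul_eq_mul,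
      hB₂, hE]
    have hif : (if j = v ∧ i = v then (1:ℝ) else 0) = (if i = v ∧ j = v then (1:ℝ) else 0) :=
      if_congr and_comm rfl rfl
    rw [hif]
    by_cases h : i ∈ S₂ ∧ j ∈ S₂ ∧ ¬(i = v ∧ j = v)
    · rw [if_pos ⟨h.2.1, h.1, fun hc => h.2.2 ⟨hc.2, hc.1⟩⟩, if_pos h, hAs i j]
    · rw [if_neg (fun hc => h ⟨hc.2.1, hc.1, fun hd => hc.2.2 ⟨hd.2, hd.1⟩⟩), if_neg h]
  · -- A = A₁ + A₂
    conv_lhs => rw [hdecomp]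
    ext i j
    simp only [Matrix.add_apply, Matrix.smul_apply, smul_eq_mul]
    ring
  · intro i j h
    simp only [Matrix.add_apply, Matrix.smul_apply, smul_eq_mul]
    rw [hsupp₁ i j h, hE, if_neg, mul_zero, add_zero]
    rintro ⟨rfl, rfl⟩
    rcases h with h | h <;> exact h hv1
  · intro i j h
    simp only [Matrix.add_apply, Matrix.smul_apply, smul_eq_mul]
    rw [hsupp₂ i j h, hE, if_neg, mul_zero, add_zero]
    rintro ⟨rfl, rfl⟩
    rcases h with h | h <;> exact h hv2
  · intro i j hne hi hj
    simp only [Matrix.add_apply, Matrix.smul_apply, smul_eq_mul]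
    rw [hB₁, if_pos ⟨hi, hj, fun hc => hne (hc.1.trans hc.2.symm)⟩, hE,
      if_neg (fun hc : i = v ∧ j = v => hne (hc.1.trans hc.2.symm)), mul_zero, add_zero]
  · intro i j hne hi hj
    simp only [Matrix.add_apply, Matrix.smul_apply, smul_eq_mul]
    rw [hB₂, if_pos ⟨hi, hj, fun hc => hne (hc.1.trans hc.2.symm)⟩, hE,
      if_neg (fun hc : i = v ∧ j = v => hne (hc.1.trans hc.2.symm)), mul_zero, add_zero]
end
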